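/- arXiv:1101.4166 — 2 statements merged into one kernel-verified Lean document; each statement's English description precedes it below -/
import Mathlib

section
/- Let $f \in L^\infty(m)$ satisfy $\mathcal{P}^t_\varepsilon f = e^{\lambda t} f$ for all $t \ge 0$, with $\lambda < 0$, normalized so that $\int |f|\,dm = 2$ and $\int f\, dm = 0$. Let $A^+ = \{f \ge 0\}$. Then for every integer $k \ge 0$ and $t > 0$: $\mathrm{Prob}_\nu(X(\ell t) \in A^+ \text{ for } \ell = 0,\ldots,k) \ge e^{\lambda k t}$, where $\nu$ is the signed measure with density $f$; consequently the upper escape rate from $A^+$ with respect to Lebesgue measure satisfies $\bar{E}_\varepsilon(A^+) \le -t\lambda$. -/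
open MeasureTheory Filter Topology

/-!
Let `Q h = 𝒫ᵗ (1_{A⁺} h)` be the semigroup killed outside `A⁺`, so that `Q^[k]` describes the
process observed at times `0, t, …, kt` while it stays in `A⁺`. Since `f ≤ 1_{A⁺} f`, positivity
gives `Q f ≥ 𝒫ᵗ f = e^{λt} f`, and as `Q` is monotone and linear, `Q^[k] f ≥ e^{λkt} f`.
Integrating over `A⁺`, where `∫ f = (∫ f + ∫ |f|) / 2 = 1`, gives the first claim. Since `f ≤ C`,
also `Q^[k] f ≤ C • Q^[k] 1`, so the survival probabilities are at least `e^{λkt} / C`, and the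
escape rate is at most `-λt`.
-/

section Iterates

variable {E : Type*} [AddCommMonoid E] [PartialOrder E] [Module ℝ E]
  {Q : E →ₗ[ℝ] E}

theorem LinearMap.pow_smul_le_iterate [PosSMulMono ℝ E] (hQ : Monotone Q) {r : ℝ} (hr : 0 ≤ r)
    {f : E} (hf : r • f ≤ Q f) (k : ℕ) : r ^ k • f ≤ Q^[k] f := by
  induction k with
  | zero => simp
  | succ k ih =>
    calc r ^ (k + 1) • f = r ^ k • r • f := by rw [pow_succ, mul_smul]
      _ ≤ r ^ k • Q f := smul_le_smul_of_nonneg_left hf (pow_nonneg hr k)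
      _ = Q (r ^ k • f) := (Q.map_smul _ _).symm
      _ ≤ Q^[k + 1] f := by rw [Function.iterate_succ_apply']; exact hQ ih

theorem LinearMap.iterate_le_smul_iterate (hQ : Monotone Q) {c : ℝ} {f g : E}
    (hfg : f ≤ c • g) (k : ℕ) : Q^[k] f ≤ c • Q^[k] g :=
  calc Q^[k] f ≤ Q^[k] (c • g) := hQ.iterate k hfg
    _ = c • Q^[k] g := by rw [← Module.End.pow_apply, map_smul, Module.End.pow_apply]

end Iterates

section Liminf

theorem le_liminf_of_tendsto_of_eventually_le {ι : Type*} {l : Filter ι} [l.NeBot]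
    {u w : ι → ℝ} {a : ℝ} (ha : a ≤ 0) (hw : Tendsto w l (𝓝 a)) (hwu : ∀ᶠ i in l, w i ≤ u i) :
    a ≤ liminf u l := by
  by_cases hu : IsCoboundedUnder (· ≥ ·) l u
  · rw [← hw.liminf_eq]
    exact liminf_le_liminf hwu hw.isBoundedUnder_ge hu
  · -- the liminf of a real sequence that is not bounded above is `0` by convention
    rw [Real.liminf_of_not_isCoboundedUnder hu]
    exact ha

theorem le_liminf_inv_mul_log {u : ℕ → ℝ} {ρ C : ℝ} (hρ : ρ ≤ 0) (hC : 1 ≤ C)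
    (hu : ∀ k : ℕ, u k = 0 ∨ Real.exp (ρ * k) ≤ C * u k) :
    ρ ≤ liminf (fun k : ℕ => (1 / (k : ℝ)) * Real.log (u k)) atTop := by
  refine le_liminf_of_tendsto_of_eventually_le hρ (w := fun k : ℕ => ρ - Real.log C / k) ?_ ?_
  · simpa using tendsto_const_nhds.sub (tendsto_const_div_atTop_nhds_zero_nat (Real.log C))
  filter_upwards [eventually_gt_atTop 0] with k hk
  have hk' : (0 : ℝ) < k := Nat.cast_pos.mpr hk
  have hlog : ρ * k - Real.log C ≤ Real.log (u k) := by
    rcases hu k with hzero | hle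
    · rw [hzero, Real.log_zero]
      nlinarith [Real.log_nonneg hC]
    · have hCpos : 0 < C := by linarith
      calc ρ * k - Real.log C = Real.log (Real.exp (ρ * k) / C) := by
            rw [Real.log_div (Real.exp_ne_zero _) hCpos.ne', Real.log_exp]
        _ ≤ Real.log (u k) := Real.log_le_log (by positivity) ((div_le_iff₀' hCpos).mpr hle)
  calc ρ - Real.log C / k = 1 / k * (ρ * k - Real.log C) := by field_simp
    _ ≤ 1 / k * Real.log (u k) := mul_le_mul_of_nonneg_left hlog (by positivity)

end Liminf

section KilledOperator

variable {M : Type*}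

noncomputable def Set.indicatorₗ (A : Set M) : (M → ℝ) →ₗ[ℝ] (M → ℝ) where
  toFun := A.indicator
  map_add' := Set.indicator_add A
  map_smul' := Set.indicator_const_smul A

variable {T : (M → ℝ) →ₗ[ℝ] (M → ℝ)} {A : Set M}

theorem monotone_comp_indicatorₗ (hT : ∀ g, 0 ≤ g → 0 ≤ T g) :
    Monotone (T ∘ₗ A.indicatorₗ) :=
  (OrderHomClass.mono (PositiveLinearMap.mk₀ T hT)).comp fun _ _ h => Set.indicator_mono h

theorem smul_le_apply_indicator_setOf_nonneg (hT : ∀ g, 0 ≤ g → 0 ≤ T g) {f : M → ℝ} {r : ℝ}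
    (hf : T f = r • f) : r • f ≤ T ({x | 0 ≤ f x}.indicator f) :=
  hf ▸ OrderHomClass.mono (PositiveLinearMap.mk₀ T hT)
    (by simpa using Set.indicator_le_indicator_nonneg Set.univ f)

variable [MeasurableSpace M] {m : Measure M}

theorem integrable_iterate_comp_indicatorₗ (hT : ∀ g, Integrable g m → Integrable (T g) m)
    (hA : NullMeasurableSet A m) {g : M → ℝ} (hg : Integrable g m) (k : ℕ) :
    Integrable ((T ∘ₗ A.indicatorₗ)^[k] g) m := by
  induction k with
  | zero => exact hg
  | succ k ih =>
    rw [Function.iterate_succ_apply']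
    exact hT _ (ih.indicator₀ hA)

theorem pow_mul_setIntegral_le_setIntegral_iterate (hTpos : ∀ g, 0 ≤ g → 0 ≤ T g)
    (hTint : ∀ g, Integrable g m → Integrable (T g) m) (hA : NullMeasurableSet A m)
    {f : M → ℝ} (hf : Integrable f m) {r : ℝ} (hr : 0 ≤ r) (hrf : r • f ≤ T (A.indicator f))
    (k : ℕ) : r ^ k * ∫ x in A, f x ∂m ≤ ∫ x in A, (T ∘ₗ A.indicatorₗ)^[k] f x ∂m := by
  rw [← integral_const_mul]
  exact integral_mono (hf.restrict.const_mul _)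
    (integrable_iterate_comp_indicatorₗ hTint hA hf k).restrict
    (LinearMap.pow_smul_le_iterate (monotone_comp_indicatorₗ hTpos) hr hrf k)

/-- The first alternative is the junk value of `∫` when `Q^[k] g` is not integrable on `A`. -/
theorem setIntegral_iterate_eq_zero_or_le_mul {Q : (M → ℝ) →ₗ[ℝ] (M → ℝ)} (hQ : Monotone Q)
    {f g : M → ℝ} {c : ℝ} (hfg : f ≤ c • g) {k : ℕ} (hf : IntegrableOn (Q^[k] f) A m) :
    ∫ x in A, Q^[k] g x ∂m = 0 ∨ ∫ x in A, Q^[k] f x ∂m ≤ c * ∫ x in A, Q^[k] g x ∂m := by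
  by_cases hg : IntegrableOn (Q^[k] g) A m
  · rw [← integral_const_mul]
    exact Or.inr (integral_mono hf (hg.const_mul c) (LinearMap.iterate_le_smul_iterate hQ hfg k))
  · exact Or.inl (integral_undef hg)

theorem setIntegral_setOf_nonneg_self {f : M → ℝ} (hf : Integrable f m) :
    ∫ x in {x | 0 ≤ f x}, f x ∂m = (∫ x, f x ∂m + ∫ x, |f x| ∂m) / 2 := by
  have hpos : {x | 0 ≤ f x}.indicator f = fun x => (f x + |f x|) / 2 := by
    ext x
    by_cases hx : 0 ≤ f x
    · simp [hx, abs_of_nonneg hx]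
    · simp [hx, abs_of_neg (not_le.mp hx)]
  rw [← integral_indicator₀ (nullMeasurableSet_le aemeasurable_const hf.aemeasurable), hpos,
    integral_div, integral_add hf hf.abs]

end KilledOperator

/-- If `𝒫ᵗ_ε f = e^{λ t} f` with `λ < 0`, `∫|f| = 2`, `∫ f = 0`, and `A⁺ = {f ≥ 0}`, then
`Prob_ν(X(ℓt) ∈ A⁺, ℓ = 0,…,k) ≥ e^{λ k t}` for all `k`, where `ν` has density `f`, and the
upper escape rate of `A⁺` with respect to Lebesgue measure satisfies `Ē_ε(A⁺) ≤ -tλ`. -/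
theorem stmt9 {M : Type*} [MeasurableSpace M] (m : Measure M)
    (P : ℝ → ((M → ℝ) →ₗ[ℝ] (M → ℝ)))
    (hpos : ∀ t ≥ (0:ℝ), ∀ g : M → ℝ, (∀ x, 0 ≤ g x) → ∀ x, 0 ≤ (P t) g x)
    (hint : ∀ t ≥ (0:ℝ), ∀ g : M → ℝ, Integrable g m →
      Integrable ((P t) g) m ∧ ∫ x, (P t) g x ∂m = ∫ x, g x ∂m)
    (f : M → ℝ) (hfint : Integrable f m) (hfbdd : ∃ C, ∀ x, |f x| ≤ C)
    (lam : ℝ) (hlam : lam < 0)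
    (heig : ∀ t ≥ (0:ℝ), (P t) f = fun x => Real.exp (lam * t) * f x)
    (hnorm : ∫ x, |f x| ∂m = 2) (hzero : ∫ x, f x ∂m = 0)
    (t : ℝ) (ht : 0 < t)
    (Ap : Set M) (hAp : Ap = {x | 0 ≤ f x}) :
    (∀ k : ℕ, Real.exp (lam * k * t)
        ≤ ∫ x in Ap, ((fun h : M → ℝ => (P t) (Ap.indicator h))^[k] f) x ∂m) ∧
    -Filter.liminf (fun k : ℕ => (1 / (k : ℝ)) *
        Real.log (∫ x in Ap,
          ((fun h : M → ℝ => (P t) (Ap.indicator h))^[k] (fun _ => (1:ℝ))) x ∂m))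
      Filter.atTop ≤ -t * lam := by
  obtain ⟨C, hC⟩ := hfbdd
  have hA : NullMeasurableSet Ap m :=
    hAp ▸ nullMeasurableSet_le aemeasurable_const hfint.aemeasurable
  have hTint g (hg : Integrable g m) := (hint t ht.le g hg).1
  have hf_le : Real.exp (lam * t) • f ≤ P t (Ap.indicator f) :=
    hAp ▸ smul_le_apply_indicator_setOf_nonneg (hpos t ht.le) (r := Real.exp (lam * t))
      (heig t ht.le)
  have hfC : f ≤ max C 1 • fun _ => (1 : ℝ) := fun x => by
    simpa using (le_abs_self _).trans ((hC x).trans (le_max_left C 1))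
  have hAf : ∫ x in Ap, f x ∂m = 1 := by
    rw [hAp, setIntegral_setOf_nonneg_self hfint, hzero, hnorm]
    norm_num
  have survival (k : ℕ) :
      Real.exp (lam * t * k) ≤ ∫ x in Ap, (P t ∘ₗ Ap.indicatorₗ)^[k] f x ∂m := by
    simpa [hAf, ← Real.exp_nat_mul, mul_comm] using pow_mul_setIntegral_le_setIntegral_iterate
      (hpos t ht.le) hTint hA hfint (Real.exp_pos _).le hf_le k
  rw [show (fun h => P t (Ap.indicator h)) = ⇑(P t ∘ₗ Ap.indicatorₗ) from rfl, neg_mul,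
    neg_le_neg_iff, mul_comm t]
  refine ⟨fun k => by simpa only [mul_right_comm] using survival k,
    le_liminf_inv_mul_log (mul_neg_of_neg_of_pos hlam ht).le (le_max_right C 1) fun k => ?_⟩
  exact (setIntegral_iterate_eq_zero_or_le_mul (monotone_comp_indicatorₗ (hpos t ht.le)) hfC
    (integrable_iterate_comp_indicatorₗ hTint hA hfint k).integrableOn).imp_right
    (survival k).trans
end

section
/- Let $M = \mathbb{T}^1$, $F: \mathbb{T}^1 \to \mathbb{R}$ continuous with $F \ge 0$, and $\Phi^t$ the flow of $\dot{x} = F(x)$. Let $0 = x_0 < x_1 < \cdots < x_n = 1$ and $B_i = [x_{i-1}, x_i]$. Then the Ulam generator matrix satisfies $(A_n)_{i,i+1} = F(x_i)/m(B_{i+1})$, $(A_n)_{ii} = -F(x_i)/m(B_i)$, and $(A_n)_{ij} = 0$ otherwise (indices mod $n$), where $(A_n)_{ij} = \lim_{t\to 0^+} m(B_i \cap \Phi^{-t}B_j)/(t\, m(B_j))$ for $i\neq j$ and $(A_n)_{ii} = \lim_{t\to0^+}(m(B_i\cap\Phi^{-t}B_i)-m(B_i))/(t\,m(B_i))$. 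-/
/-!
A point of the cell `B_i = [a, b)` moves by at most `t C` in time `t`, where `C` bounds `F`; so
for small `t` it either stays in `B_i` or enters the next cell, the latter exactly when it lies in
the exit set `{y : b ≤ φ t y}`. Since `F` is continuous at `b`, points near `b` move with speed
`F b ± ε`, which squeezes the exit set between `[b - t (F b - ε), b)` and `[b - t (F b + ε), b)`.
Hence its measure is `t F(b) + o(t)`, and the measure of the points staying in `B_i` is
`m(B_i) - t F(b) + o(t)`. The circle measure of a subset of `[0, 1]` is its Lebesgue measure, so
everything can be computed on the line; these sets need not be measurable, which is why
they are squeezed between intervals rather than subtracted.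
-/

open MeasureTheory Filter Topology Set

theorem AddCircle.volume_coe_image_of_subset_Ioc {T : ℝ} [Fact (0 < T)] {a : ℝ} {S : Set ℝ}
    (hS : S ⊆ Ioc a (a + T)) : volume (((↑) : ℝ → AddCircle T) '' S) = volume S := by
  have hpres : MeasurePreserving (measurableEquivIoc T a) volume
      (Measure.comap Subtype.val volume) := measurePreserving_equivIoc T
  have himage : ((↑) : ℝ → AddCircle T) '' S =
      measurableEquivIoc T a ⁻¹' (Subtype.val ⁻¹' S) := by
    ext x
    constructor
    · rintro ⟨y, hy, rfl⟩
      show (equivIoc T a y : ℝ) ∈ S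
      rwa [equivIoc_coe_eq (hS hy)]
    · intro hx
      exact ⟨_, hx, coe_equivIoc⟩
  rw [himage, hpres.measure_preimage_equiv,
    (MeasurableEmbedding.subtype_coe measurableSet_Ioc).comap_apply, Subtype.image_preimage_coe,
    inter_eq_right.2 hS]

theorem AddCircle.volume_coe_image_of_subset_Icc {T : ℝ} [Fact (0 < T)] {a : ℝ} {S : Set ℝ}
    (hS : S ⊆ Icc a (a + T)) : volume (((↑) : ℝ → AddCircle T) '' S) = volume S := by
  have hdiff : S \ {a} ⊆ Ioc a (a + T) := fun y hy =>
    ⟨lt_of_le_of_ne (hS hy.1).1 (Ne.symm hy.2), (hS hy.1).2⟩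
  have hsingle : ({a} : Set ℝ) ⊆ Ioc (a - T) (a - T + T) := by simp [(Fact.out : 0 < T)]
  apply le_antisymm
  · calc volume (((↑) : ℝ → AddCircle T) '' S)
        ≤ volume (((↑) : ℝ → AddCircle T) '' (S \ {a}) ∪ ((↑) : ℝ → AddCircle T) '' {a}) := by
          rw [← image_union, sdiff_union_self]
          exact measure_mono (image_mono subset_union_left)
      _ ≤ volume (((↑) : ℝ → AddCircle T) '' (S \ {a})) +
            volume (((↑) : ℝ → AddCircle T) '' {a}) := measure_union_le _ _
      _ ≤ volume S := by
          rw [volume_coe_image_of_subset_Ioc hsingle, volume_coe_image_of_subset_Ioc hdiff,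
            Real.volume_singleton, add_zero]
          exact measure_mono sdiff_subset
  · calc volume S = volume (S \ {a}) := (measure_sdiff_null (Real.volume_singleton)).symm
      _ = _ := (volume_coe_image_of_subset_Ioc hdiff).symm
      _ ≤ _ := measure_mono (image_mono sdiff_subset)

theorem le_toReal_volume_of_Ico_subset {S : Set ℝ} {a b c d : ℝ} (hcd : Ico c d ⊆ S)
    (hS : S ⊆ Ico a b) : d - c ≤ (volume S).toReal := by
  have hfin : volume S ≠ ⊤ :=
    ((measure_mono hS).trans_lt (by simp [Real.volume_Ico])).ne
  calc d - c ≤ (volume (Ico c d)).toReal := by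
        rw [Real.volume_Ico, ENNReal.toReal_ofReal']
        exact le_max_left _ _
    _ ≤ (volume S).toReal := ENNReal.toReal_mono hfin (measure_mono hcd)

theorem toReal_volume_le_of_subset_Ico {S : Set ℝ} {c d : ℝ} (hS : S ⊆ Ico c d) (hcd : c ≤ d) :
    (volume S).toReal ≤ d - c := by
  calc (volume S).toReal ≤ (volume (Ico c d)).toReal :=
        ENNReal.toReal_mono (by simp [Real.volume_Ico]) (measure_mono hS)
    _ = d - c := by rw [Real.volume_Ico, ENNReal.toReal_ofReal (sub_nonneg.2 hcd)]

theorem eventually_mul_lt_nhdsGT (K : ℝ) {r : ℝ} (hr : 0 < r) :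
    ∀ᶠ t in 𝓝[>] (0 : ℝ), t * K < r := by
  have : Tendsto (fun t : ℝ => t * K) (𝓝 0) (𝓝 0) := by
    simpa using (continuous_mul_const K).tendsto 0
  exact (this.mono_left nhdsWithin_le_nhds).eventually (gt_mem_nhds hr)

theorem tendsto_div_nhdsGT_of_bounds {f : ℝ → ℝ} {L : ℝ}
    (h : ∀ ε > 0, ∀ᶠ t in 𝓝[>] (0 : ℝ), t * (L - ε) ≤ f t ∧ f t ≤ t * (L + ε)) :
    Tendsto (fun t => f t / t) (𝓝[>] 0) (𝓝 L) := by
  rw [Metric.tendsto_nhds]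
  intro ε hε
  filter_upwards [h (ε / 2) (half_pos hε), self_mem_nhdsWithin] with t ⟨hlo, hhi⟩ (ht : 0 < t)
  rw [Real.dist_eq, abs_lt, lt_sub_iff_add_lt, sub_lt_iff_lt_add, lt_div_iff₀ ht, div_lt_iff₀ ht]
  constructor <;> nlinarith

structure IsFlowOf (F : ℝ → ℝ) (φ : ℝ → ℝ → ℝ) : Prop where
  map_zero : ∀ x, φ 0 x = x
  hasDerivAt : ∀ x t, HasDerivAt (fun s => φ s x) (F (φ t x)) t

namespace IsFlowOf

variable {F : ℝ → ℝ} {φ : ℝ → ℝ → ℝ}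

theorem continuous_time (hφ : IsFlowOf F φ) (x : ℝ) : Continuous fun s => φ s x :=
  continuous_iff_continuousAt.2 fun s => (hφ.hasDerivAt x s).continuousAt

theorem add_mul_le (hφ : IsFlowOf F φ) {x t L : ℝ} (ht : 0 ≤ t)
    (hL : ∀ s ∈ Icc 0 t, L ≤ F (φ s x)) : x + t * L ≤ φ t x := by
  have := (convex_Icc 0 t).mul_sub_le_image_sub_of_le_deriv (hφ.continuous_time x).continuousOn
    (fun s _ => (hφ.hasDerivAt x s).differentiableAt.differentiableWithinAt)
    (fun s hs => (hφ.hasDerivAt x s).deriv ▸ hL s (interior_subset hs))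
    0 (left_mem_Icc.2 ht) t (right_mem_Icc.2 ht) ht
  simp only [hφ.map_zero, sub_zero] at this
  linarith

theorem le_add_mul (hφ : IsFlowOf F φ) {x t U : ℝ} (ht : 0 ≤ t)
    (hU : ∀ s ∈ Icc 0 t, F (φ s x) ≤ U) : φ t x ≤ x + t * U := by
  have := (convex_Icc 0 t).image_sub_le_mul_sub_of_deriv_le (hφ.continuous_time x).continuousOn
    (fun s _ => (hφ.hasDerivAt x s).differentiableAt.differentiableWithinAt)
    (fun s hs => (hφ.hasDerivAt x s).deriv ▸ hU s (interior_subset hs))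
    0 (left_mem_Icc.2 ht) t (right_mem_Icc.2 ht) ht
  simp only [hφ.map_zero, sub_zero] at this
  linarith

theorem le_apply (hφ : IsFlowOf F φ) (hF : ∀ x, 0 ≤ F x) {x t : ℝ} (ht : 0 ≤ t) : x ≤ φ t x := by
  simpa using hφ.add_mul_le ht fun s _ => hF (φ s x)

theorem eventually_crossing (hφ : IsFlowOf F φ) (hF : Continuous F) (hF0 : ∀ x, 0 ≤ F x)
    {C : ℝ} (hC : ∀ x, F x ≤ C) (b : ℝ) {ε : ℝ} (hε : 0 < ε) :
    ∀ᶠ t in 𝓝[>] (0 : ℝ), ∀ y < b,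
      (b ≤ φ t y → b - t * (F b + ε) ≤ y) ∧ (b - t * (F b - ε) ≤ y → b ≤ φ t y) := by
  -- Within `δ / 2` of `b` the speed is `ε`-close to `F b`; farther away, `t C < δ / 2` keeps
  -- the point below `b`.
  obtain ⟨δ, hδ, hFδ⟩ := Metric.continuousAt_iff.1 hF.continuousAt ε hε
  have hC0 : 0 ≤ C := (hF0 b).trans (hC b)
  filter_upwards [eventually_mul_lt_nhdsGT C (half_pos hδ),
    eventually_mul_lt_nhdsGT (F b + ε) (half_pos hδ), self_mem_nhdsWithin]
    with t htC htF (ht : 0 < t) y hyb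
  have hnear : b - δ / 2 ≤ y → ∀ s ∈ Icc 0 t, F b - ε ≤ F (φ s y) ∧ F (φ s y) ≤ F b + ε := by
    intro hy s hs
    have hlo := hφ.le_apply hF0 (x := y) hs.1
    have hhi := hφ.le_add_mul hs.1 (x := y) fun r _ => hC (φ r y)
    have hdist : dist (φ s y) b < δ := by
      rw [Real.dist_eq, abs_lt]
      constructor <;> nlinarith [hs.2]
    have := hFδ hdist
    rw [Real.dist_eq, abs_lt] at this
    constructor <;> linarith
  constructor
  · intro hbφ
    by_contra! hy
    rcases lt_or_ge y (b - δ / 2) with hfar | hy'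
    · have := hφ.le_add_mul ht.le (x := y) fun r _ => hC (φ r y)
      linarith
    · have := hφ.le_add_mul ht.le fun s hs => (hnear hy' s hs).2
      linarith
  · intro hy
    have hy' : b - δ / 2 ≤ y := by nlinarith
    have := hφ.add_mul_le ht.le fun s hs => (hnear hy' s hs).1
    linarith

theorem tendsto_volume_exit_div (hφ : IsFlowOf F φ) (hF : Continuous F) (hF0 : ∀ x, 0 ≤ F x)
    {C : ℝ} (hC : ∀ x, F x ≤ C) {a b : ℝ} (hab : a < b) :
    Tendsto (fun t => (volume {y ∈ Ico a b | b ≤ φ t y}).toReal / t) (𝓝[>] 0) (𝓝 (F b)) := by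
  refine tendsto_div_nhdsGT_of_bounds fun ε hε => ?_
  filter_upwards [hφ.eventually_crossing hF hF0 hC b hε,
    eventually_mul_lt_nhdsGT (F b + ε) (sub_pos.2 hab), self_mem_nhdsWithin]
    with t hcross hwidth (ht : 0 < t)
  have hlower : Ico (b - t * (F b - ε)) b ⊆ {y ∈ Ico a b | b ≤ φ t y} := fun y hy =>
    ⟨⟨by nlinarith [hy.1], hy.2⟩, (hcross y hy.2).2 hy.1⟩
  have hupper : {y ∈ Ico a b | b ≤ φ t y} ⊆ Ico (b - t * (F b + ε)) b := fun y hy =>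
    ⟨(hcross y hy.1.2).1 hy.2, hy.1.2⟩
  constructor
  · simpa using le_toReal_volume_of_Ico_subset hlower (sep_subset _ _)
  · simpa using toReal_volume_le_of_subset_Ico hupper (by nlinarith [hF0 b])

theorem tendsto_volume_stay_sub_div (hφ : IsFlowOf F φ) (hF : Continuous F)
    (hF0 : ∀ x, 0 ≤ F x) {C : ℝ} (hC : ∀ x, F x ≤ C) {a b : ℝ} (hab : a < b) :
    Tendsto (fun t => ((volume {y ∈ Ico a b | φ t y < b}).toReal - (b - a)) / t) (𝓝[>] 0)
      (𝓝 (-F b)) := by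
  refine tendsto_div_nhdsGT_of_bounds fun ε hε => ?_
  filter_upwards [hφ.eventually_crossing hF hF0 hC b hε,
    eventually_mul_lt_nhdsGT (F b + ε) (sub_pos.2 hab), self_mem_nhdsWithin]
    with t hcross hwidth (ht : 0 < t)
  have hlower : Ico a (b - t * (F b + ε)) ⊆ {y ∈ Ico a b | φ t y < b} := fun y hy => by
    have hyb : y < b := by nlinarith [hy.2, hF0 b]
    refine ⟨⟨hy.1, hyb⟩, lt_of_not_ge fun hφy => ?_⟩
    linarith [(hcross y hyb).1 hφy, hy.2]
  have hupper : {y ∈ Ico a b | φ t y < b} ⊆ Ico a (b - t * (F b - ε)) := fun y hy =>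
    ⟨hy.1.1, lt_of_not_ge fun hby => (hcross y hy.1.2).2 hby |>.not_gt hy.2⟩
  constructor
  · have := le_toReal_volume_of_Ico_subset hlower (sep_subset _ _)
    linarith
  · have := toReal_volume_le_of_subset_Ico hupper (by nlinarith)
    linarith

end IsFlowOf

def circleCell {n : ℕ} (xs : Fin (n + 1) → ℝ) (i : Fin n) : Set (AddCircle (1 : ℝ)) :=
  (↑) '' Ico (xs i.castSucc) (xs i.succ)

section Partition

variable {n : ℕ} {xs : Fin (n + 1) → ℝ}

theorem Ico_subset_Ico_zero_one (hxs : Monotone xs) (hxs0 : xs 0 = 0)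
    (hxs1 : xs (Fin.last n) = 1) (i : Fin n) : Ico (xs i.castSucc) (xs i.succ) ⊆ Ico 0 1 :=
  Ico_subset_Ico (hxs0 ▸ hxs (Fin.zero_le _)) (hxs1 ▸ hxs (Fin.le_last _))

theorem eq_of_mem_circleCell (hxs : Monotone xs) (hxs0 : xs 0 = 0)
    (hxs1 : xs (Fin.last n) = 1) {z : AddCircle (1 : ℝ)} {j k : Fin n}
    (hj : z ∈ circleCell xs j) (hk : z ∈ circleCell xs k) : j = k := by
  obtain ⟨u, hu, rfl⟩ := hj
  obtain ⟨v, hv, huv⟩ := hk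
  have hIco : Ico (0 : ℝ) 1 = Ico 0 (0 + 1) := by rw [zero_add]
  have hvu : v = u := (AddCircle.coe_eq_coe_iff_of_mem_Ico
    (hIco ▸ Ico_subset_Ico_zero_one hxs hxs0 hxs1 k hv)
    (hIco ▸ Ico_subset_Ico_zero_one hxs hxs0 hxs1 j hu)).1 huv
  subst hvu
  by_contra hjk
  rcases lt_or_gt_of_ne hjk with h | h
  · linarith [hu.2, hv.1, hxs (Fin.succ_le_castSucc_iff.2 h)]
  · linarith [hu.1, hv.2, hxs (Fin.succ_le_castSucc_iff.2 h)]

theorem coe_mem_circleCell_add_one [NeZero n] (hxs0 : xs 0 = 0) (hxs1 : xs (Fin.last n) = 1)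
    {i : Fin n} {u : ℝ}
    (hu : u ∈ Ico (xs i.succ) (xs i.succ + (xs (i + 1).succ - xs (i + 1).castSucc))) :
    (u : AddCircle (1 : ℝ)) ∈ circleCell xs (i + 1) := by
  rcases (Nat.add_one_le_of_lt i.isLt).lt_or_eq with h | h
  · have hcast : (i + 1).castSucc = i.succ := Fin.ext (by simp [Fin.val_add_one_of_lt' h])
    rw [hcast] at hu
    exact ⟨u, ⟨by rw [hcast]; exact hu.1, by linarith [hu.2]⟩, rfl⟩
  · have hzero : i + 1 = 0 := Fin.ext (by simp [Fin.val_add]; simp [h])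
    have hlast : i.succ = Fin.last n := Fin.ext (by simp [← h])
    rw [hzero, hlast, hxs1, Fin.castSucc_zero, hxs0] at hu
    rw [hzero]
    refine ⟨u - 1, ⟨?_, ?_⟩, ?_⟩
    · rw [Fin.castSucc_zero, hxs0]; linarith [hu.1]
    · linarith [hu.2]
    · rw [← AddCircle.coe_add_period 1 (u - 1), sub_add_cancel]

end Partition

theorem eventually_circleCell_inter_preimage {n : ℕ} [NeZero n] {xs : Fin (n + 1) → ℝ}
    (hxs : StrictMono xs) (hxs0 : xs 0 = 0) (hxs1 : xs (Fin.last n) = 1)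
    {F : ℝ → ℝ} {φ : ℝ → ℝ → ℝ} (hφ : IsFlowOf F φ) (hF0 : ∀ x, 0 ≤ F x)
    {C : ℝ} (hC : ∀ x, F x ≤ C) {Φ : ℝ → AddCircle (1 : ℝ) → AddCircle (1 : ℝ)}
    (hΦ : ∀ (t : ℝ) (x : ℝ), Φ t (x : AddCircle (1 : ℝ)) = ((φ t x : ℝ) : AddCircle (1 : ℝ)))
    (i j : Fin n) :
    ∀ᶠ t in 𝓝[>] (0 : ℝ), circleCell xs i ∩ Φ t ⁻¹' circleCell xs j =
      (↑) '' {y ∈ Ico (xs i.castSucc) (xs i.succ) |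
        (j = i ∧ φ t y < xs i.succ) ∨ (j = i + 1 ∧ xs i.succ ≤ φ t y)} := by
  -- Once `t C` is below the width of the next cell, no point can skip over it.
  have hwidth : 0 < xs (i + 1).succ - xs (i + 1).castSucc :=
    sub_pos.2 (hxs Fin.castSucc_lt_succ)
  filter_upwards [eventually_mul_lt_nhdsGT C hwidth, self_mem_nhdsWithin] with t htC (ht : 0 < t)
  have hland : ∀ y ∈ Ico (xs i.castSucc) (xs i.succ),
      (φ t y < xs i.succ → ((φ t y : ℝ) : AddCircle (1 : ℝ)) ∈ circleCell xs i) ∧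
      (xs i.succ ≤ φ t y → ((φ t y : ℝ) : AddCircle (1 : ℝ)) ∈ circleCell xs (i + 1)) := by
    intro y hy
    refine ⟨fun h => ⟨φ t y, ⟨hy.1.trans (hφ.le_apply hF0 ht.le), h⟩, rfl⟩, fun h => ?_⟩
    have := hφ.le_add_mul ht.le (x := y) fun s _ => hC (φ s y)
    exact coe_mem_circleCell_add_one hxs0 hxs1 ⟨h, by linarith [hy.2]⟩
  ext z
  constructor
  · rintro ⟨⟨y, hy, rfl⟩, hyj⟩
    rw [mem_preimage, hΦ] at hyj
    refine ⟨y, ⟨hy, ?_⟩, rfl⟩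
    rcases lt_or_ge (φ t y) (xs i.succ) with h | h
    · exact Or.inl ⟨eq_of_mem_circleCell hxs.monotone hxs0 hxs1 hyj ((hland y hy).1 h), h⟩
    · exact Or.inr ⟨eq_of_mem_circleCell hxs.monotone hxs0 hxs1 hyj ((hland y hy).2 h), h⟩
  · rintro ⟨y, ⟨hy, hj⟩, rfl⟩
    refine ⟨⟨y, hy, rfl⟩, ?_⟩
    rw [mem_preimage, hΦ]
    rcases hj with ⟨rfl, h⟩ | ⟨rfl, h⟩
    exacts [(hland y hy).1 h, (hland y hy).2 h]

/-- Ulam's method for the generator in one dimension: for the flow of `ẋ = F(x)` with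
`F ≥ 0` on the circle and the partition `B_i = [x_{i-1}, x_i]`, the matrix entries
`(A_n)_{ij} = lim_{t→0⁺} m(B_i ∩ Φ⁻ᵗ B_j)/(t m(B_j))` (for `i ≠ j`) and
`(A_n)_{ii} = lim_{t→0⁺} (m(B_i ∩ Φ⁻ᵗ B_i) - m(B_i))/(t m(B_i))` satisfy
`(A_n)_{i,i+1} = F(x_i)/m(B_{i+1})`, `(A_n)_{ii} = -F(x_i)/m(B_i)` and `(A_n)_{ij} = 0`
otherwise (indices mod `n`). -/
theorem stmt13 {n : ℕ} [NeZero n] (hn : 1 < n)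
    (F : ℝ → ℝ) (hFcont : Continuous F) (hFper : Function.Periodic F 1)
    (hFpos : ∀ x, 0 ≤ F x)
    (φ : ℝ → ℝ → ℝ) (hφ0 : ∀ x, φ 0 x = x)
    (hφode : ∀ x t, HasDerivAt (fun s => φ s x) (F (φ t x)) t)
    (Φ : ℝ → AddCircle (1:ℝ) → AddCircle (1:ℝ))
    (hΦ : ∀ (t : ℝ) (x : ℝ), Φ t (x : AddCircle (1:ℝ)) = ((φ t x : ℝ) : AddCircle (1:ℝ)))
    (xs : Fin (n + 1) → ℝ) (hxs : StrictMono xs)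
    (hxs0 : xs 0 = 0) (hxs1 : xs (Fin.last n) = 1)
    (B : Fin n → Set (AddCircle (1:ℝ)))
    (hB : ∀ i : Fin n,
      B i = (fun y : ℝ => (y : AddCircle (1:ℝ))) '' Set.Ico (xs i.castSucc) (xs i.succ)) :
    ∀ i j : Fin n,
      (i ≠ j →
        Tendsto (fun t : ℝ =>
            (volume (B i ∩ (Φ t) ⁻¹' (B j))).toReal / (t * (volume (B j)).toReal))
          (𝓝[>] (0:ℝ))
          (𝓝 (if j = i + 1 then F (xs i.succ) / (volume (B j)).toReal else 0))) ∧
      Tendsto (fun t : ℝ =>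
          ((volume (B i ∩ (Φ t) ⁻¹' (B i))).toReal - (volume (B i)).toReal)
            / (t * (volume (B i)).toReal))
        (𝓝[>] (0:ℝ)) (𝓝 (-F (xs i.succ) / (volume (B i)).toReal)) := by
  obtain ⟨C, hC⟩ := (hFper.compact_of_continuous one_ne_zero hFcont).bddAbove
  replace hC : ∀ x, F x ≤ C := fun x => hC (mem_range_self x)
  have hφ : IsFlowOf F φ := ⟨hφ0, hφode⟩
  obtain rfl : B = circleCell xs := funext hB
  intro i j
  have hab : xs i.castSucc < xs i.succ := hxs Fin.castSucc_lt_succ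
  have hvol {S : Set ℝ} (hS : S ⊆ Ico (xs i.castSucc) (xs i.succ)) :
      volume (((↑) : ℝ → AddCircle (1 : ℝ)) '' S) = volume S :=
    AddCircle.volume_coe_image_of_subset_Icc (a := 0) <| by
      rw [zero_add]
      exact hS.trans ((Ico_subset_Ico_zero_one hxs.monotone hxs0 hxs1 i).trans Ico_subset_Icc_self)
  have hcell : (volume (circleCell xs i)).toReal = xs i.succ - xs i.castSucc := by
    rw [circleCell, hvol subset_rfl, Real.volume_Ico, ENNReal.toReal_ofReal (sub_nonneg.2 hab.le)]
  have hsucc : i + 1 ≠ i := by simpa using hn.ne'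
  have hpre := eventually_circleCell_inter_preimage hxs hxs0 hxs1 hφ hFpos hC hΦ i
  simp_rw [← div_div]
  refine ⟨fun hij => ?_, ?_⟩
  · split_ifs with hj
    · subst hj
      refine ((hφ.tendsto_volume_exit_div hFcont hFpos hC hab).div_const _).congr' ?_
      filter_upwards [hpre (i + 1)] with t ht
      rw [ht, hvol (sep_subset _ _)]
      simp [hsucc]
    · refine tendsto_const_nhds.congr' ?_
      filter_upwards [hpre j] with t ht
      simp [ht, hj, Ne.symm hij]
  · rw [hcell]
    refine ((hφ.tendsto_volume_stay_sub_div hFcont hFpos hC hab).div_const _).congr' ?_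
    filter_upwards [hpre i] with t ht
    rw [ht, hvol (sep_subset _ _)]
    simp [hsucc.symm]
end
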